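/- In a simply-laced root system (type A, D, or E), if b, c ∈ P_− are antidominant weights with b_− ≺ c_− (i.e., c − b ∈ Q_+ \ {0} after sign conventions: b − c ∈ Q_−, b ≠ c), then b can be obtained from c by a chain of steps, each subtracting from the current antidominant weight the highest root θ_t of the root subsystem generated by a connected component I_t of the set {i : (x, αᵢ) ≤ 0} (where x is the current difference), each intermediate weight remaining antidominant. -/

import Mathlib

open scoped RealInnerProductSpace Pointwise BigOperators

noncomputable section

namespace SimplyLacedChain

variable {n : ℕ}

abbrev V (n : ℕ) := EuclideanSpace ℝ (Fin n)

/-- Adjacency in the Dynkin diagram of the simple roots. -/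
def adj (simple : Fin n → V n) (i j : Fin n) : Prop :=
  i ≠ j ∧ ⟪simple i, simple j⟫ ≠ 0

/-- `I` is connected in the Dynkin diagram. -/
def ConnIn (simple : Fin n → V n) (I : Set (Fin n)) : Prop :=
  ∀ i ∈ I, ∀ j ∈ I,
    Relation.ReflTransGen (fun a c => a ∈ I ∧ c ∈ I ∧ adj simple a c) i j

/-- `θt` is the highest root of the root subsystem generated by `{αᵢ : i ∈ I}`:
it is a positive root supported on `I`, and it dominates every positive root
supported on `I` with respect to `Q₊`. -/
def IsHighestOf (Rplus : Set (V n)) (simple : Fin n → V n) (I : Set (Fin n))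
    (θt : V n) : Prop :=
  θt ∈ Rplus ∧
  (∃ c : Fin n → ℕ, (∀ i, i ∉ I → c i = 0) ∧ θt = ∑ i, (c i : ℝ) • simple i) ∧
  ∀ γ ∈ Rplus,
    (∃ c : Fin n → ℕ, (∀ i, i ∉ I → c i = 0) ∧ γ = ∑ i, (c i : ℝ) • simple i) →
    ∃ c : Fin n → ℕ, θt - γ = ∑ i, (c i : ℝ) • simple i

/-- One step of the chain towards the target `b`: subtract from the current
antidominant weight `c'` the highest root `θt` of the subsystem generated by a
connected component `I` of `{i : (b − c', αᵢ) ≤ 0}`, the result `c''` remaining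
antidominant. -/
def Step (Rplus : Set (V n)) (simple : Fin n → V n) (b c' c'' : V n) : Prop :=
  ∃ (I : Set (Fin n)) (θt : V n),
    I.Nonempty ∧
    I ⊆ {i | ⟪b - c', simple i⟫ ≤ 0} ∧
    ConnIn simple I ∧
    (∀ j, ⟪b - c', simple j⟫ ≤ 0 → j ∉ I → ∀ i ∈ I, ¬ adj simple j i) ∧
    IsHighestOf Rplus simple I θt ∧
    c'' = c' - θt ∧
    (∀ i, ⟪c'', simple i⟫ ≤ 0)

/-! If `x = c - b ∈ Q₊` is nonzero then `⟪x, x⟫ > 0`, so `x` pairs positively with some `αᵢ`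
with `i` in its support. Let `I` be the component of `i` in `J = {j | ⟪x, αⱼ⟫ ≥ 0}`; the
coefficients of `x` are positive on `I`. The highest root `θ` of `I` exists because two maximal
positive roots supported on `I` pair positively, so their difference would be a root.
Then `θ ≤ x`: otherwise `θ = u + z` with `u = min(θ, x)` coefficientwise and `z ≠ 0`, so
`⟪z, z⟫ ≥ 2` in the even lattice `Q` and `⟪u, z⟫ ≥ 0`, whence `⟪u, u⟫ = 2 - 2⟪u, z⟫ - ⟪z, z⟫ ≤ 0`
and `u = 0`, against the positivity of `x` on `I`. Finally `c - θ` is antidominant: `θ` is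
dominant on `I`, orthogonal to `αⱼ` for `j ∈ J \ I`, and for `j ∉ J` integrality gives
`⟪x, αⱼ⟫ ≤ -1 ≤ ⟪θ, αⱼ⟫`. Induct on the height of `x`. -/

section Diagram

variable (simple : Fin n → V n)

theorem adj_symm {i j : Fin n} (h : adj simple i j) : adj simple j i :=
  ⟨h.1.symm, by rw [real_inner_comm]; exact h.2⟩

def adjIn (J : Set (Fin n)) (a b : Fin n) : Prop :=
  a ∈ J ∧ b ∈ J ∧ adj simple a b

def component (J : Set (Fin n)) (i : Fin n) : Set (Fin n) :=
  {j | Relation.ReflTransGen (adjIn simple J) i j}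

variable {simple} {J : Set (Fin n)} {i : Fin n}

theorem mem_component_self : i ∈ component simple J i := Relation.ReflTransGen.refl

theorem component_subset (hi : i ∈ J) : component simple J i ⊆ J := by
  intro j hj
  cases Relation.ReflTransGen.cases_tail hj with
  | inl h => exact h ▸ hi
  | inr h => obtain ⟨_, _, hab⟩ := h; exact hab.2.1

theorem mem_component_of_adj (hi : i ∈ J) {j k : Fin n} (hj : j ∈ component simple J i)
    (hk : k ∈ J) (hjk : adj simple j k) : k ∈ component simple J i :=
  Relation.ReflTransGen.tail hj ⟨component_subset hi hj, hk, hjk⟩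

theorem connIn_component : ConnIn simple (component simple J i) := by
  have hpath : ∀ k ∈ component simple J i,
      Relation.ReflTransGen (adjIn simple (component simple J i)) i k := by
    intro k hk
    induction hk with
    | refl => exact .refl
    | @tail a b hia hab ih => exact ih.tail ⟨hia, hia.tail hab, hab.2.2⟩
  have : Std.Symm (adjIn simple (component simple J i)) :=
    ⟨fun _ _ h => ⟨h.2.1, h.1, adj_symm simple h.2.2⟩⟩
  exact fun j hj k hk => (Std.Symm.symm _ _ (hpath j hj)).trans (hpath k hk)

end Diagram

structure SimplyLacedRootSystem (n : ℕ) where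
  roots : Set (V n)
  pos : Set (V n)
  simple : Fin n → V n
  finite_roots : roots.Finite
  roots_eq : roots = pos ∪ -pos
  disjoint_pos_neg : Disjoint pos (-pos)
  zero_notMem_roots : (0 : V n) ∉ roots
  simple_mem_pos : ∀ i, simple i ∈ pos
  linearIndependent : LinearIndependent ℝ simple
  exists_nat_coeffs : ∀ α ∈ pos, ∃ c : Fin n → ℕ, α = ∑ i, (c i : ℝ) • simple i
  inner_self_eq_two : ∀ α ∈ roots, ⟪α, α⟫ = 2
  reflection_mem : ∀ α ∈ roots, ∀ β ∈ roots, β - ⟪β, α⟫ • α ∈ roots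
  exists_int_inner : ∀ α ∈ roots, ∀ β ∈ roots, ∃ m : ℤ, ⟪β, α⟫ = m

namespace SimplyLacedRootSystem

variable (S : SimplyLacedRootSystem n)

def comb (c : Fin n → ℕ) : V n := ∑ i, (c i : ℝ) • S.simple i

@[simp]
theorem comb_zero : S.comb 0 = 0 := by simp [comb]

theorem comb_add (c d : Fin n → ℕ) : S.comb (c + d) = S.comb c + S.comb d := by
  simp [comb, add_smul, Finset.sum_add_distrib]

theorem comb_single (i : Fin n) : S.comb (Pi.single i 1) = S.simple i := by
  simp [comb, Pi.single_apply]

theorem comb_injective : Function.Injective S.comb := fun c d h =>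
  funext fun i => by exact_mod_cast Fintype.linearIndependent_iffₛ.mp S.linearIndependent _ _ h i

theorem comb_eq_zero_iff {c : Fin n → ℕ} : S.comb c = 0 ↔ c = 0 :=
  S.comb_injective.eq_iff' S.comb_zero

theorem inner_comb_left (c : Fin n → ℕ) (v : V n) :
    ⟪S.comb c, v⟫ = ∑ i, (c i : ℝ) * ⟪S.simple i, v⟫ := by
  simp only [comb, sum_inner, real_inner_smul_left]

theorem pos_subset_roots : S.pos ⊆ S.roots := S.roots_eq ▸ Set.subset_union_left

theorem simple_mem_roots (i : Fin n) : S.simple i ∈ S.roots :=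
  S.pos_subset_roots (S.simple_mem_pos i)

theorem ne_zero_of_mem_roots {α : V n} (hα : α ∈ S.roots) : α ≠ 0 :=
  fun h => S.zero_notMem_roots (h ▸ hα)

theorem neg_mem_roots {α : V n} (hα : α ∈ S.roots) : -α ∈ S.roots := by
  rw [S.roots_eq] at hα ⊢
  rcases hα with h | h
  · exact Or.inr (Set.neg_mem_neg.mpr h)
  · exact Or.inl (Set.mem_neg.mp h)

theorem ne_neg_of_mem_pos {α β : V n} (hα : α ∈ S.pos) (hβ : β ∈ S.pos) : α ≠ -β := by
  rintro rfl
  exact S.disjoint_pos_neg.ne_of_mem hα (Set.neg_mem_neg.mpr hβ) rfl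

theorem eq_comb_or_neg_eq_comb {α : V n} (hα : α ∈ S.roots) :
    (∃ c, α = S.comb c) ∨ ∃ c, -α = S.comb c := by
  rw [S.roots_eq] at hα
  exact hα.imp (S.exists_nat_coeffs α) (S.exists_nat_coeffs (-α))

theorem mem_pos_of_eq_comb {α : V n} {c : Fin n → ℕ} (hα : α ∈ S.roots) (hc : α = S.comb c) :
    α ∈ S.pos := by
  rcases S.roots_eq ▸ hα with h | h
  · exact h
  obtain ⟨d, hd⟩ : ∃ d, -α = S.comb d := S.exists_nat_coeffs _ (Set.mem_neg.mp h)
  have hcd : c + d = 0 := S.comb_eq_zero_iff.mp <| by rw [S.comb_add, ← hc, ← hd, add_neg_cancel]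
  have hc0 : c = 0 := funext fun i => (Nat.add_eq_zero_iff.mp (congrFun hcd i)).1
  exact absurd (hc.trans (hc0 ▸ S.comb_zero)) (S.ne_zero_of_mem_roots hα)

theorem inner_le_one {α β : V n} (hα : α ∈ S.roots) (hβ : β ∈ S.roots) (hne : α ≠ β) :
    ⟪α, β⟫ ≤ 1 := by
  obtain ⟨m, hm⟩ := S.exists_int_inner β hβ α hα
  have hpos : 0 < ⟪α - β, α - β⟫ := real_inner_self_pos.mpr (sub_ne_zero.mpr hne)
  rw [real_inner_sub_sub_self, S.inner_self_eq_two α hα, S.inner_self_eq_two β hβ, hm] at hpos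
  have : m < 2 := by exact_mod_cast (show (m : ℝ) < 2 by linarith)
  rw [hm]
  exact_mod_cast (show m ≤ 1 by omega)

theorem sub_mem_roots_of_inner_pos {α β : V n} (hα : α ∈ S.roots) (hβ : β ∈ S.roots)
    (hpos : 0 < ⟪α, β⟫) (hne : α ≠ β) : α - β ∈ S.roots := by
  obtain ⟨m, hm⟩ := S.exists_int_inner β hβ α hα
  have hle := S.inner_le_one hα hβ hne
  rw [hm] at hpos hle
  have hm1 : m = 1 := by
    have : 0 < m := by exact_mod_cast hpos
    have : m ≤ 1 := by exact_mod_cast hle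
    omega
  simpa [hm, hm1] using S.reflection_mem β hβ α hα

theorem neg_one_le_inner {α β : V n} (hα : α ∈ S.pos) (hβ : β ∈ S.pos) : -1 ≤ ⟪α, β⟫ := by
  have := S.inner_le_one (S.pos_subset_roots hα) (S.neg_mem_roots (S.pos_subset_roots hβ))
    (S.ne_neg_of_mem_pos hα hβ)
  rw [inner_neg_right] at this
  linarith

theorem simple_sub_simple_ne_comb {i j : Fin n} (hij : i ≠ j) (c : Fin n → ℕ) :
    S.simple i - S.simple j ≠ S.comb c := by
  intro h
  have : Pi.single i 1 = c + Pi.single j 1 := S.comb_injective <| by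
    rw [S.comb_add, S.comb_single, S.comb_single, ← h, sub_add_cancel]
  simpa [hij] using congrFun this j

theorem inner_simple_nonpos {i j : Fin n} (hij : i ≠ j) : ⟪S.simple i, S.simple j⟫ ≤ 0 := by
  by_contra! hpos
  have hroot := S.sub_mem_roots_of_inner_pos (S.simple_mem_roots i) (S.simple_mem_roots j) hpos
    (S.linearIndependent.injective.ne hij)
  rcases S.eq_comb_or_neg_eq_comb hroot with ⟨c, hc⟩ | ⟨c, hc⟩
  · exact S.simple_sub_simple_ne_comb hij c hc
  · exact S.simple_sub_simple_ne_comb hij.symm c (by rw [← hc, neg_sub])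

theorem inner_comb_simple_nonpos {c : Fin n → ℕ} {j : Fin n} (hj : c j = 0) (i : Fin n) :
    (c i : ℝ) * ⟪S.simple i, S.simple j⟫ ≤ 0 := by
  rcases eq_or_ne i j with rfl | hij
  · simp [hj]
  · exact mul_nonpos_of_nonneg_of_nonpos (Nat.cast_nonneg _) (S.inner_simple_nonpos hij)

theorem inner_comb_simple_neg {c : Fin n → ℕ} {i j : Fin n} (hij : adj S.simple i j)
    (hi : c i ≠ 0) (hj : c j = 0) : ⟪S.comb c, S.simple j⟫ < 0 := by
  rw [inner_comb_left]
  refine Finset.sum_neg' (fun k _ => S.inner_comb_simple_nonpos hj k) ⟨i, Finset.mem_univ _, ?_⟩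
  exact mul_neg_of_pos_of_neg (by positivity) ((S.inner_simple_nonpos hij.1).lt_of_ne hij.2)

theorem inner_comb_comb_nonpos {c d : Fin n → ℕ} (h : ∀ i, c i = 0 ∨ d i = 0) :
    ⟪S.comb c, S.comb d⟫ ≤ 0 := by
  rw [inner_comb_left]
  refine Finset.sum_nonpos fun i _ => ?_
  rcases h i with hc | hd
  · simp [hc]
  · rw [real_inner_comm, inner_comb_left]
    exact mul_nonpos_of_nonneg_of_nonpos (Nat.cast_nonneg _)
      (Finset.sum_nonpos fun k _ => S.inner_comb_simple_nonpos hd k)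

theorem inner_comb_simple_eq_zero {c : Fin n → ℕ} {j : Fin n} (hj : c j = 0)
    (h : ∀ i, c i ≠ 0 → ¬ adj S.simple i j) : ⟪S.comb c, S.simple j⟫ = 0 := by
  rw [inner_comb_left]
  refine Finset.sum_eq_zero fun i _ => ?_
  rcases eq_or_ne (c i) 0 with hi | hi
  · simp [hi]
  · have hij : i ≠ j := fun e => hi (e ▸ hj)
    simp [not_not.mp fun hne => h i hi ⟨hij, hne⟩]

theorem coeff_ne_zero_of_reflTransGen {J : Set (Fin n)} {c : Fin n → ℕ}
    (hJ : ∀ j ∈ J, 0 ≤ ⟪S.comb c, S.simple j⟫) {i j : Fin n}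
    (hij : Relation.ReflTransGen (adjIn S.simple J) i j) (hi : c i ≠ 0) : c j ≠ 0 := by
  induction hij with
  | refl => exact hi
  | tail _ hab ih => exact fun hb => (hJ _ hab.2.1).not_gt (S.inner_comb_simple_neg hab.2.2 ih hb)

theorem exists_coeff_ne_zero_inner_pos {c : Fin n → ℕ} (hc : c ≠ 0) :
    ∃ i, c i ≠ 0 ∧ 0 < ⟪S.comb c, S.simple i⟫ := by
  have hpos : 0 < ⟪S.comb c, S.comb c⟫ := real_inner_self_pos.mpr (S.comb_eq_zero_iff.not.mpr hc)
  nth_rw 1 [inner_comb_left] at hpos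
  obtain ⟨i, -, hi⟩ : ∃ i ∈ Finset.univ, (0 : ℝ) < (c i : ℝ) * ⟪S.simple i, S.comb c⟫ :=
    Finset.exists_lt_of_sum_lt (by simpa using hpos)
  refine ⟨i, fun h => by simp [h] at hi, ?_⟩
  rw [real_inner_comm]
  exact pos_of_mul_pos_right hi (Nat.cast_nonneg _)

def rootLattice : AddSubgroup (V n) := AddSubgroup.closure (Set.range S.simple)

theorem simple_mem_rootLattice (i : Fin n) : S.simple i ∈ S.rootLattice :=
  AddSubgroup.subset_closure (Set.mem_range_self i)

theorem comb_mem_rootLattice (c : Fin n → ℕ) : S.comb c ∈ S.rootLattice :=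
  AddSubgroup.sum_mem _ fun i _ => by
    rw [Nat.cast_smul_eq_nsmul]
    exact AddSubgroup.nsmul_mem _ (S.simple_mem_rootLattice i) _

theorem exists_int_inner_of_mem_rootLattice {v w : V n} (hv : v ∈ S.rootLattice)
    (hw : w ∈ S.rootLattice) : ∃ m : ℤ, ⟪v, w⟫ = m := by
  suffices ⟪v, w⟫ ∈ (Int.castRingHom ℝ).range by
    obtain ⟨m, hm⟩ := this
    exact ⟨m, by simpa using hm.symm⟩
  have hsimple : ∀ i, ∀ w ∈ S.rootLattice, ⟪S.simple i, w⟫ ∈ (Int.castRingHom ℝ).range := by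
    intro i w hw
    induction hw using AddSubgroup.closure_induction with
    | mem _ h =>
      obtain ⟨j, rfl⟩ := h
      obtain ⟨m, hm⟩ := S.exists_int_inner _ (S.simple_mem_roots j) _ (S.simple_mem_roots i)
      exact ⟨m, by simp [hm]⟩
    | zero => simp
    | add _ _ _ _ hx hy => simpa [inner_add_right] using add_mem hx hy
    | neg _ _ hx => simpa [inner_neg_right] using neg_mem hx
  induction hv using AddSubgroup.closure_induction with
  | mem _ h => obtain ⟨i, rfl⟩ := h; exact hsimple i w hw
  | zero => simp
  | add _ _ _ _ hx hy => simpa [inner_add_left] using add_mem hx hy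
  | neg _ _ hx => simpa [inner_neg_left] using neg_mem hx

theorem exists_int_inner_self_eq_two_mul {v : V n} (hv : v ∈ S.rootLattice) :
    ∃ k : ℤ, ⟪v, v⟫ = 2 * k := by
  induction hv using AddSubgroup.closure_induction with
  | mem _ h =>
    obtain ⟨i, rfl⟩ := h
    exact ⟨1, by rw [S.inner_self_eq_two _ (S.simple_mem_roots i)]; norm_num⟩
  | zero => exact ⟨0, by simp⟩
  | add x y hx hy hkx hky =>
    obtain ⟨a, ha⟩ := hkx
    obtain ⟨b, hb⟩ := hky
    obtain ⟨m, hm⟩ := S.exists_int_inner_of_mem_rootLattice hx hy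
    refine ⟨a + m + b, ?_⟩
    rw [real_inner_add_add_self, ha, hb, hm]
    push_cast
    ring
  | neg x _ hk => simpa using hk

theorem two_le_inner_self {v : V n} (hv : v ∈ S.rootLattice) (hne : v ≠ 0) : 2 ≤ ⟪v, v⟫ := by
  obtain ⟨k, hk⟩ := S.exists_int_inner_self_eq_two_mul hv
  have hpos := real_inner_self_pos.mpr hne
  rw [hk] at hpos ⊢
  have : 0 < k := by exact_mod_cast (show (0 : ℝ) < k by linarith)
  have : (1 : ℝ) ≤ k := by exact_mod_cast this
  linarith

theorem inner_le_neg_one_of_neg {v w : V n} (hv : v ∈ S.rootLattice) (hw : w ∈ S.rootLattice)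
    (hneg : ⟪v, w⟫ < 0) : ⟪v, w⟫ ≤ -1 := by
  obtain ⟨m, hm⟩ := S.exists_int_inner_of_mem_rootLattice hv hw
  rw [hm] at hneg ⊢
  have : m < 0 := by exact_mod_cast hneg
  exact_mod_cast (show m ≤ -1 by omega)

def height : V n →ₗ[ℝ] ℝ :=
  (basisOfLinearIndependentOfCardEqFinrank' S.simple S.linearIndependent (by simp)).sumCoords

theorem height_simple (i : Fin n) : S.height (S.simple i) = 1 := by
  have h := Module.Basis.sumCoords_self_apply
    (b := basisOfLinearIndependentOfCardEqFinrank' S.simple S.linearIndependent (by simp)) (i := i)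
  rwa [coe_basisOfLinearIndependentOfCardEqFinrank'] at h

theorem height_comb (c : Fin n → ℕ) : S.height (S.comb c) = ∑ i, (c i : ℝ) := by
  simp [comb, height_simple]

theorem eq_of_sub_eq_comb_of_height_le {γ δ : V n} {e : Fin n → ℕ} (he : δ - γ = S.comb e)
    (hle : S.height δ ≤ S.height γ) : δ = γ := by
  have hsum : ∑ i, (e i : ℝ) ≤ 0 := by
    rw [← S.height_comb, ← he, map_sub]
    linarith
  have he0 : e = 0 := funext fun i => by
    exact_mod_cast (Finset.sum_eq_zero_iff_of_nonneg (fun i _ => Nat.cast_nonneg (e i))).mp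
      (hsum.antisymm (by positivity)) i (Finset.mem_univ i)
  rwa [he0, comb_zero, sub_eq_zero] at he

def posOn (I : Set (Fin n)) : Set (V n) :=
  {γ ∈ S.pos | ∃ c : Fin n → ℕ, (∀ i, i ∉ I → c i = 0) ∧ γ = S.comb c}

def IsMaximalIn (I : Set (Fin n)) (γ : V n) : Prop :=
  γ ∈ S.posOn I ∧ ∀ δ ∈ S.posOn I, (∃ e, δ - γ = S.comb e) → δ = γ

variable {I : Set (Fin n)}

theorem simple_mem_posOn {i : Fin n} (hi : i ∈ I) : S.simple i ∈ S.posOn I := by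
  refine ⟨S.simple_mem_pos i, Pi.single i 1, fun j hj => ?_, (S.comb_single i).symm⟩
  exact Pi.single_eq_of_ne (ne_of_mem_of_not_mem hi hj).symm _

theorem add_simple_mem_posOn {γ : V n} {i : Fin n} (hγ : γ ∈ S.posOn I) (hi : i ∈ I)
    (hneg : ⟪γ, S.simple i⟫ < 0) : γ + S.simple i ∈ S.posOn I := by
  obtain ⟨hγpos, c, hcI, hc⟩ := hγ
  have hroot : γ + S.simple i ∈ S.roots := by
    rw [← sub_neg_eq_add]
    refine S.sub_mem_roots_of_inner_pos (S.pos_subset_roots hγpos)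
      (S.neg_mem_roots (S.simple_mem_roots i)) (by rw [inner_neg_right]; linarith)
      (S.ne_neg_of_mem_pos hγpos (S.simple_mem_pos i))
  have hcomb : γ + S.simple i = S.comb (c + Pi.single i 1) := by
    rw [S.comb_add, S.comb_single, hc]
  refine ⟨S.mem_pos_of_eq_comb hroot hcomb, _, fun j hj => ?_, hcomb⟩
  simp [hcI j hj, Pi.single_eq_of_ne (ne_of_mem_of_not_mem hi hj).symm]

variable {S}

theorem IsMaximalIn.inner_simple_nonneg {γ : V n} (hγ : S.IsMaximalIn I γ) {i : Fin n}
    (hi : i ∈ I) : 0 ≤ ⟪γ, S.simple i⟫ := by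
  by_contra! hneg
  have := hγ.2 _ (S.add_simple_mem_posOn hγ.1 hi hneg)
    ⟨Pi.single i 1, by rw [add_sub_cancel_left, S.comb_single]⟩
  exact S.ne_zero_of_mem_roots (S.simple_mem_roots i) (by simpa using this)

theorem IsMaximalIn.coeff_ne_zero {γ : V n} (hγ : S.IsMaximalIn I γ) (hI : ConnIn S.simple I)
    {c : Fin n → ℕ} (hcI : ∀ i, i ∉ I → c i = 0) (hc : γ = S.comb c) {i : Fin n} (hi : i ∈ I) :
    c i ≠ 0 := by
  have hc0 : c ≠ 0 := by
    rintro rfl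
    exact S.ne_zero_of_mem_roots (S.pos_subset_roots hγ.1.1) (hc.trans S.comb_zero)
  obtain ⟨u, hu⟩ := Function.ne_iff.mp hc0
  have huI : u ∈ I := by_contra fun h => hu (hcI u h)
  exact S.coeff_ne_zero_of_reflTransGen (fun j hj => hc ▸ hγ.inner_simple_nonneg hj)
    (hI u huI i hi) hu

theorem IsMaximalIn.eq {γ θ : V n} (hγ : S.IsMaximalIn I γ) (hθ : S.IsMaximalIn I θ)
    (hI : ConnIn S.simple I) : γ = θ := by
  by_contra hne
  obtain ⟨hγpos, c, hcI, hc⟩ := hγ.1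
  obtain ⟨hθpos, m, hmI, hm⟩ := hθ.1
  have hm0 : m ≠ 0 := by
    rintro rfl
    exact S.ne_zero_of_mem_roots (S.pos_subset_roots hθpos) (hm.trans S.comb_zero)
  obtain ⟨i, hmi, hθi⟩ := S.exists_coeff_ne_zero_inner_pos hm0
  have hiI : i ∈ I := by_contra fun h => hmi (hmI i h)
  have hpos : 0 < ⟪θ, γ⟫ := by
    rw [real_inner_comm, hc, inner_comb_left]
    refine Finset.sum_pos' (fun k _ => ?_) ⟨i, Finset.mem_univ _, mul_pos ?_ ?_⟩
    · by_cases hk : k ∈ I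
      · rw [real_inner_comm]
        exact mul_nonneg (Nat.cast_nonneg _) (hθ.inner_simple_nonneg hk)
      · simp [hcI k hk]
    · exact Nat.cast_pos.mpr (Nat.pos_of_ne_zero (hγ.coeff_ne_zero hI hcI hc hiI))
    · rwa [real_inner_comm, hm]
  rcases S.eq_comb_or_neg_eq_comb (S.sub_mem_roots_of_inner_pos (S.pos_subset_roots hθpos)
    (S.pos_subset_roots hγpos) hpos (Ne.symm hne)) with ⟨e, he⟩ | ⟨e, he⟩
  · exact hne (hγ.2 θ hθ.1 ⟨e, he⟩).symm
  · exact hne (hθ.2 γ hγ.1 ⟨e, by rw [← he, neg_sub]⟩)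

variable (S)

theorem exists_isMaximalIn_sub_eq_comb {γ : V n} (hγ : γ ∈ S.posOn I) :
    ∃ δ, S.IsMaximalIn I δ ∧ ∃ e, δ - γ = S.comb e := by
  obtain ⟨δ, ⟨hδ, e, he⟩, hmax⟩ := Set.exists_max_image {δ ∈ S.posOn I | ∃ e, δ - γ = S.comb e}
    S.height ((S.finite_roots.subset fun _ h => S.pos_subset_roots h.1).subset fun _ h => h.1)
    ⟨γ, hγ, 0, by simp⟩
  refine ⟨δ, ⟨hδ, fun δ' hδ' ⟨e', he'⟩ => ?_⟩, e, he⟩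
  refine S.eq_of_sub_eq_comb_of_height_le he' (hmax δ' ⟨hδ', e + e', ?_⟩)
  rw [S.comb_add, ← he, ← he', sub_add_sub_cancel']

theorem exists_isHighestOf (hI : I.Nonempty) (hconn : ConnIn S.simple I) :
    ∃ θ, IsHighestOf S.pos S.simple I θ ∧ ∀ i ∈ I, 0 ≤ ⟪θ, S.simple i⟫ := by
  obtain ⟨i, hi⟩ := hI
  obtain ⟨θ, hθ, -⟩ := S.exists_isMaximalIn_sub_eq_comb (S.simple_mem_posOn hi)
  refine ⟨θ, ⟨hθ.1.1, hθ.1.2, fun γ hγ hγI => ?_⟩, fun j hj => hθ.inner_simple_nonneg hj⟩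
  obtain ⟨δ, hδ, hδγ⟩ := S.exists_isMaximalIn_sub_eq_comb ⟨hγ, hγI⟩
  rwa [hδ.eq hθ hconn] at hδγ

theorem le_of_inner_self_eq_two {l m : Fin n → ℕ} (hmI : ∀ i, i ∉ I → m i = 0)
    (hlI : ∀ i ∈ I, l i ≠ 0) (hl : ∀ i ∈ I, 0 ≤ ⟪S.comb l, S.simple i⟫)
    (hm : ⟪S.comb m, S.comb m⟫ = 2) : m ≤ l := by
  by_contra hml
  set z := S.comb (m - l)
  set u := S.comb (m ⊓ l)
  have hm_eq : S.comb m = u + z := by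
    rw [← S.comb_add]; congr 1; ext i; simp only [Pi.add_apply, Pi.inf_apply, Pi.sub_apply]; omega
  have hl_eq : S.comb l = u + S.comb (l - m) := by
    rw [← S.comb_add]; congr 1; ext i; simp only [Pi.add_apply, Pi.inf_apply, Pi.sub_apply]; omega
  have hz : 2 ≤ ⟪z, z⟫ := by
    refine S.two_le_inner_self (S.comb_mem_rootLattice _) (S.comb_eq_zero_iff.not.mpr fun h => ?_)
    exact hml fun i => Nat.sub_eq_zero_iff_le.mp (congrFun h i)
  have hxz : 0 ≤ ⟪S.comb l, z⟫ := by
    rw [real_inner_comm, inner_comb_left]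
    refine Finset.sum_nonneg fun i _ => ?_
    rcases eq_or_ne ((m - l) i) 0 with h | h
    · simp [h]
    · have hi : i ∈ I := by_contra fun hi => h (by simp [hmI i hi])
      rw [real_inner_comm]
      exact mul_nonneg (Nat.cast_nonneg _) (hl i hi)
  have hwz : ⟪S.comb (l - m), z⟫ ≤ 0 :=
    S.inner_comb_comb_nonpos fun i => by simp only [Pi.sub_apply]; omega
  have huz : 0 ≤ ⟪u, z⟫ := by
    rw [hl_eq, inner_add_left] at hxz
    linarith
  have hu : u = 0 := by
    rw [← real_inner_self_nonpos]
    rw [hm_eq, real_inner_add_add_self] at hm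
    linarith
  obtain ⟨i, hi⟩ : ∃ i, l i < m i := by simpa [Pi.le_def] using hml
  have hiI : i ∈ I := by_contra fun h => by simp [hmI i h] at hi
  have := congrFun (S.comb_eq_zero_iff.mp hu) i
  simp only [Pi.inf_apply, Pi.zero_apply] at this
  exact hlI i hiI (by omega)

theorem inner_sub_simple_nonpos {b c' θ : V n} {l m : Fin n → ℕ}
    (hb : ∀ j, ⟪b, S.simple j⟫ ≤ 0) (hc' : ∀ j, ⟪c', S.simple j⟫ ≤ 0) (hl : c' - b = S.comb l)
    (hθpos : θ ∈ S.pos) (hθ : θ = S.comb m) (hmI : ∀ i, i ∉ I → m i = 0)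
    (hθI : ∀ i ∈ I, 0 ≤ ⟪θ, S.simple i⟫)
    (hIJ : ∀ j, 0 ≤ ⟪S.comb l, S.simple j⟫ → j ∉ I → ∀ i ∈ I, ¬ adj S.simple i j) (j : Fin n) :
    ⟪c' - θ, S.simple j⟫ ≤ 0 := by
  rw [inner_sub_left]
  by_cases hjI : j ∈ I
  · linarith [hc' j, hθI j hjI]
  by_cases hjJ : 0 ≤ ⟪S.comb l, S.simple j⟫
  · rw [hθ, S.inner_comb_simple_eq_zero (hmI j hjI) fun i hi =>
      hIJ j hjJ hjI i (by_contra fun h => hi (hmI i h))]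
    linarith [hc' j]
  · have hx := S.inner_le_neg_one_of_neg (S.comb_mem_rootLattice l) (S.simple_mem_rootLattice j)
      (not_le.mp hjJ)
    rw [← hl, inner_sub_left] at hx
    linarith [hb j, S.neg_one_le_inner hθpos (S.simple_mem_pos j)]

theorem exists_step {b c' : V n} {l : Fin n → ℕ} (hb : ∀ i, ⟪b, S.simple i⟫ ≤ 0)
    (hc' : ∀ i, ⟪c', S.simple i⟫ ≤ 0) (hl : c' - b = S.comb l) (hl0 : l ≠ 0) :
    ∃ m ≤ l, m ≠ 0 ∧ Step S.pos S.simple b c' (c' - S.comb m) := by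
  set J := {j | ⟪b - c', S.simple j⟫ ≤ 0}
  have hJ : ∀ j, j ∈ J ↔ 0 ≤ ⟪S.comb l, S.simple j⟫ := fun j => by
    rw [Set.mem_ofPred_eq, ← neg_sub, hl, inner_neg_left, neg_nonpos]
  obtain ⟨i, hli, hi⟩ := S.exists_coeff_ne_zero_inner_pos hl0
  have hiJ : i ∈ J := (hJ i).2 hi.le
  set I := component S.simple J i
  have hclosed : ∀ j, j ∈ J → j ∉ I → ∀ k ∈ I, ¬ adj S.simple j k :=
    fun j hj hjI k hk hadj => hjI (mem_component_of_adj hiJ hk hj (adj_symm _ hadj))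
  obtain ⟨θ, ⟨hθpos, ⟨m, hmI, (hθ : θ = S.comb m)⟩, hθmax⟩, hθI⟩ :=
    S.exists_isHighestOf ⟨i, mem_component_self⟩ connIn_component
  have hml : m ≤ l := S.le_of_inner_self_eq_two hmI
    (fun j hj => S.coeff_ne_zero_of_reflTransGen (fun j hj => (hJ j).1 hj) hj hli)
    (fun j hj => (hJ j).1 (component_subset hiJ hj))
    (hθ ▸ S.inner_self_eq_two θ (S.pos_subset_roots hθpos))
  refine ⟨m, hml, fun hm0 => ?_, I, θ, ⟨i, mem_component_self⟩, component_subset hiJ,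
    connIn_component, hclosed, ⟨hθpos, ⟨m, hmI, hθ⟩, hθmax⟩, by rw [hθ], ?_⟩
  · exact S.ne_zero_of_mem_roots (S.pos_subset_roots hθpos) (by rw [hθ, hm0, comb_zero])
  · rw [← hθ]
    exact S.inner_sub_simple_nonpos hb hc' hl hθpos hθ hmI hθI
      fun j hj hjI k hk hadj => hclosed j ((hJ j).2 hj) hjI k hk (adj_symm _ hadj)

theorem reflTransGen_step {b c' : V n} (hb : ∀ i, ⟪b, S.simple i⟫ ≤ 0) (l : Fin n → ℕ)
    (hc' : ∀ i, ⟪c', S.simple i⟫ ≤ 0) (hl : c' - b = S.comb l) :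
    Relation.ReflTransGen (Step S.pos S.simple b) c' b := by
  rcases eq_or_ne l 0 with rfl | hl0
  · rw [S.comb_zero, sub_eq_zero] at hl
    rw [hl]
  obtain ⟨m, hml, hm0, hstep⟩ := S.exists_step hb hc' hl hl0
  obtain ⟨-, -, -, -, -, -, -, -, hdom⟩ := id hstep
  have hsub : c' - S.comb m - b = S.comb (l - m) := by
    have : S.comb (l - m) + S.comb m = S.comb l := by rw [← S.comb_add, tsub_add_cancel_of_le hml]
    rw [sub_right_comm, hl, ← this, add_sub_cancel_right]
  have hdecr : ∑ i, (l - m) i < ∑ i, l i := by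
    obtain ⟨i, hi⟩ := Function.ne_iff.mp hm0
    refine Finset.sum_lt_sum (fun j _ => Nat.sub_le _ _) ⟨i, Finset.mem_univ _, ?_⟩
    exact Nat.sub_lt_self (Nat.pos_of_ne_zero hi) (hml i)
  exact .head hstep (reflTransGen_step hb (l - m) hdom hsub)
termination_by ∑ i, l i

end SimplyLacedRootSystem

theorem chain_to_smaller_antidominant_general (n : ℕ)
    (Rset Rplus : Set (V n)) (simple : Fin n → V n)
    (hfin : Rset.Finite)
    (hR : Rset = Rplus ∪ (-Rplus)) (hdisj : Disjoint Rplus (-Rplus))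
    (h0 : (0 : V n) ∉ Rset)
    (hsimple : ∀ i, simple i ∈ Rplus)
    (hindep : LinearIndependent ℝ simple)
    (hpos_sum : ∀ α ∈ Rplus, ∃ c : Fin n → ℕ, α = ∑ i, (c i : ℝ) • simple i)
    (hlaced : ∀ α ∈ Rset, ⟪α, α⟫ = 2)
    (hrefl : ∀ α ∈ Rset, ∀ β ∈ Rset, β - ⟪β, α⟫ • α ∈ Rset)
    (hcart : ∀ α ∈ Rset, ∀ β ∈ Rset, ∃ m : ℤ, ⟪β, α⟫ = m)
    (b c : V n)
    (hbdom : ∀ i, ⟪b, simple i⟫ ≤ 0) (hcdom : ∀ i, ⟪c, simple i⟫ ≤ 0)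
    (hlt : ∃ l : Fin n → ℕ, c - b = ∑ i, (l i : ℝ) • simple i) :
    Relation.ReflTransGen (Step Rplus simple b) c b := by
  obtain ⟨l, hl⟩ := hlt
  exact SimplyLacedRootSystem.reflTransGen_step
    ⟨Rset, Rplus, simple, hfin, hR, hdisj, h0, hsimple, hindep, hpos_sum, hlaced, hrefl, hcart⟩
    hbdom l hcdom hl

/-- In a simply-laced (type `A`, `D`, `E`) irreducible root system, if `b, c ∈ P₋`
are antidominant with `b ≺ c` (i.e. `c − b ∈ Q₊ \ {0}`), then `b` is obtained from
`c` by a chain of steps, each subtracting the highest root of the subsystem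
generated by a connected component of `{i : (b − current, αᵢ) ≤ 0}`, every
intermediate weight remaining antidominant. -/
theorem chain_to_smaller_antidominant (n : ℕ)
    (Rset Rplus : Set (V n)) (simple : Fin n → V n)
    (hfin : Rset.Finite)
    (hR : Rset = Rplus ∪ (-Rplus)) (hdisj : Disjoint Rplus (-Rplus))
    (h0 : (0 : V n) ∉ Rset)
    (hsimple : ∀ i, simple i ∈ Rplus)
    (hindep : LinearIndependent ℝ simple)
    (hpos_sum : ∀ α ∈ Rplus, ∃ c : Fin n → ℕ, α = ∑ i, (c i : ℝ) • simple i)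
    (hlaced : ∀ α ∈ Rset, ⟪α, α⟫ = 2)
    (hrefl : ∀ α ∈ Rset, ∀ β ∈ Rset, β - ⟪β, α⟫ • α ∈ Rset)
    (hcart : ∀ α ∈ Rset, ∀ β ∈ Rset, ∃ m : ℤ, ⟪β, α⟫ = m)
    (hirr : ∀ S T : Set (V n), S ∪ T = Rset → (∀ a ∈ S, ∀ b ∈ T, ⟪a, b⟫ = 0) →
      S = ∅ ∨ T = ∅)
    (b c : V n)
    (hbdom : ∀ i, ⟪b, simple i⟫ ≤ 0) (hcdom : ∀ i, ⟪c, simple i⟫ ≤ 0)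
    (hlt : ∃ l : Fin n → ℕ, c - b = ∑ i, (l i : ℝ) • simple i)
    (hne : b ≠ c) :
    Relation.ReflTransGen (Step Rplus simple b) c b :=
  chain_to_smaller_antidominant_general n Rset Rplus simple hfin hR hdisj h0 hsimple hindep hpos_sum
    hlaced hrefl hcart b c hbdom hcdom hlt

end SimplyLacedChain

end
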